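/- Let C be a covering of a finite nonempty set U. Then SL(X ∩ Y) = SL(X) ∩ SL(Y) for all X, Y ⊆ U if and only if C is unary. -/

import Mathlib

open Set

/-- A covering of a finite nonempty universe `α`: a family of nonempty subsets whose union is everything. -/
def IsCovering {α : Type*} (C : Set (Set α)) : Prop :=
  (∀ K ∈ C, K.Nonempty) ∧ ⋃₀ C = Set.univ

/-- The second type of covering lower approximation. -/
def SL {α : Type*} (C : Set (Set α)) (X : Set α) : Set α :=
  ⋃₀ {K | K ∈ C ∧ K ⊆ X}

/-- The second type of covering upper approximation. -/
def SH {α : Type*} (C : Set (Set α)) (X : Set α) : Set α :=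
  ⋃₀ {K | K ∈ C ∧ (K ∩ X).Nonempty}

/-- The minimal description of a point. -/
def Md {α : Type*} (C : Set (Set α)) (x : α) : Set (Set α) :=
  {K | K ∈ C ∧ x ∈ K ∧ ∀ S ∈ C, x ∈ S → S ⊆ K → S = K}

/-- A covering is unary if every point has exactly one element in its minimal description. -/
def Unary {α : Type*} (C : Set (Set α)) : Prop :=
  ∀ x : α, ∃! K, K ∈ Md C x

/-- The neighborhood of a point. -/
def Nbhd {α : Type*} (C : Set (Set α)) (x : α) : Set α :=
  ⋂₀ {K | K ∈ C ∧ x ∈ K}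

/-- The indiscernible neighborhood of a point. -/
def IndNbhd {α : Type*} (C : Set (Set α)) (x : α) : Set α :=
  ⋃₀ {K | K ∈ C ∧ x ∈ K}

/-- A member of the covering is reducible if it is a union of other members. -/
def Reducible {α : Type*} (C : Set (Set α)) (K : Set α) : Prop :=
  ∃ D ⊆ C \ {K}, K = ⋃₀ D

/-- The reduct of a covering: its irreducible members. -/
def reduct {α : Type*} (C : Set (Set α)) : Set (Set α) :=
  {K | K ∈ C ∧ ¬ Reducible C K}

/-- The closure operator induced by the fixed point family of `SL`. -/
def clC {α : Type*} (C : Set (Set α)) (X : Set α) : Set α :=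
  ⋂₀ {S | SL C S = S ∧ X ⊆ S}

section SecondLowerApproximation

variable {α : Type*} {C : Set (Set α)}

theorem self_subset_SL {K : Set α} (hK : K ∈ C) : K ⊆ SL C K :=
  subset_sUnion_of_mem ⟨hK, subset_rfl⟩

theorem SL_mono {X Y : Set α} (h : X ⊆ Y) : SL C X ⊆ SL C Y :=
  sUnion_mono fun _ hK => ⟨hK.1, hK.2.trans h⟩

theorem SL_inter_subset (X Y : Set α) : SL C (X ∩ Y) ⊆ SL C X ∩ SL C Y :=
  subset_inter (SL_mono inter_subset_left) (SL_mono inter_subset_right)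

theorem exists_mem_Md_subset [Finite α] {x : α} {K : Set α} (hK : K ∈ C) (hx : x ∈ K) :
    ∃ M ∈ Md C x, M ⊆ K := by
  obtain ⟨M, ⟨hMC, hxM, hMK⟩, hmin⟩ :=
    (toFinite {S | S ∈ C ∧ x ∈ S ∧ S ⊆ K}).exists_minimalFor id _ ⟨K, hK, hx, subset_rfl⟩
  exact ⟨M, ⟨hMC, hxM, fun S hS hxS hSM =>
    hSM.antisymm (hmin ⟨hS, hxS, hSM.trans hMK⟩ hSM)⟩, hMK⟩

theorem mem_SL_iff_exists_mem_Md [Finite α] {X : Set α} {x : α} :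
    x ∈ SL C X ↔ ∃ M ∈ Md C x, M ⊆ X := by
  constructor
  · rintro ⟨K, ⟨hK, hKX⟩, hxK⟩
    obtain ⟨M, hM, hMK⟩ := exists_mem_Md_subset hK hxK
    exact ⟨M, hM, hMK.trans hKX⟩
  · rintro ⟨M, hM, hMX⟩
    exact ⟨M, ⟨hM.1, hMX⟩, hM.2.1⟩

theorem Unary.SL_inter [Finite α] (hU : Unary C) (X Y : Set α) :
    SL C (X ∩ Y) = SL C X ∩ SL C Y := by
  refine (SL_inter_subset X Y).antisymm fun x ⟨hxX, hxY⟩ => ?_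
  obtain ⟨M₁, hM₁, hM₁X⟩ := mem_SL_iff_exists_mem_Md.mp hxX
  obtain ⟨M₂, hM₂, hM₂Y⟩ := mem_SL_iff_exists_mem_Md.mp hxY
  have hM : M₁ = M₂ := (hU x).unique hM₁ hM₂
  exact mem_SL_iff_exists_mem_Md.mpr ⟨M₁, hM₁, subset_inter hM₁X (hM ▸ hM₂Y)⟩

-- Two minimal descriptions `K₁, K₂` of `x` coincide as soon as some member of `C`
-- through `x` fits inside `K₁ ∩ K₂`, i.e. as soon as `x ∈ SL C K₁ ∩ SL C K₂ ⊆ SL C (K₁ ∩ K₂)`.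
theorem unary_of_SL_inter [Finite α] (hC : ⋃₀ C = univ)
    (h : ∀ X Y : Set α, SL C (X ∩ Y) = SL C X ∩ SL C Y) : Unary C := by
  intro x
  obtain ⟨K, hK, hxK⟩ := mem_sUnion.mp (hC ▸ mem_univ x)
  obtain ⟨M, hM, -⟩ := exists_mem_Md_subset hK hxK
  refine ⟨M, hM, fun K' hK' => ?_⟩
  have hx : x ∈ SL C (K' ∩ M) :=
    h K' M ▸ ⟨self_subset_SL hK'.1 hK'.2.1, self_subset_SL hM.1 hM.2.1⟩
  obtain ⟨S, ⟨hS, hSsub⟩, hxS⟩ := hx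
  rw [← hK'.2.2 S hS hxS (hSsub.trans inter_subset_left),
    hM.2.2 S hS hxS (hSsub.trans inter_subset_right)]

end SecondLowerApproximation

theorem stmt_13_general {α : Type*} [Fintype α] (C : Set (Set α))
    (hC : IsCovering C) :
    (∀ X Y : Set α, SL C (X ∩ Y) = SL C X ∩ SL C Y) ↔ Unary C :=
  ⟨unary_of_SL_inter hC.2, fun hU => hU.SL_inter⟩

theorem stmt_13 {α : Type*} [Fintype α] [Nonempty α] (C : Set (Set α))
    (hC : IsCovering C) :
    (∀ X Y : Set α, SL C (X ∩ Y) = SL C X ∩ SL C Y) ↔ Unary C :=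
  stmt_13_general C hC
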